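/- arXiv:2003.06854 — 4 statements merged into one kernel-verified Lean document; each statement's English description precedes it below -/
import Mathlib

section
/- Let X and Y be Polish spaces, F ⊆ X × Y a Borel set, μ a Borel probability measure on X, and K₀ ⊆ proj_X(F) a compact set with μ(K₀) > 0. Then there exists a compact set K ⊆ F such that proj_X(K) ⊆ K₀ and μ(proj_X(K)) > 0. -/
/-!
Write the Borel set `F` as a continuous image `g '' (ℕ → ℕ)` and let `p = Prod.fst ∘ g`.
Continuity of `μ` from below, applied one coordinate at a time, yields bounds `b` such that the
images under `p` of the cylinders `{σ | ∀ i < k, σ i ≤ b i}` all meet `K₀` in measure above a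
fixed `m > 0`. The closures of these images decrease to a subset of `p '' M`, where
`M = Π i, [0, b i]` is compact, so `K := g '' M ∩ K₀ × Y` works.
-/

open MeasureTheory Set Filter Topology ENNReal

def boundedCylinder (b : ℕ → ℕ) (k : ℕ) : Set (ℕ → ℕ) := {σ | ∀ i < k, σ i ≤ b i}

theorem boundedCylinder_succ (b : ℕ → ℕ) (k : ℕ) :
    boundedCylinder b (k + 1) = boundedCylinder b k ∩ {σ | σ k ≤ b k} := by
  ext σ
  simp only [boundedCylinder, Nat.forall_lt_succ_right, mem_ofPred_eq, mem_inter_iff]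

theorem antitone_boundedCylinder (b : ℕ → ℕ) : Antitone (boundedCylinder b) :=
  fun _ _ hkl _ hσ i hi => hσ i (hi.trans_le hkl)

theorem exists_forall_boundedCylinder (P : Set (ℕ → ℕ) → Prop) (h0 : P univ)
    (hstep : ∀ S k, P S → ∃ n, P (S ∩ {σ | σ k ≤ n})) :
    ∃ b, ∀ k, P (boundedCylinder b k) := by
  choose! next hnext using hstep
  let A : ℕ → Set (ℕ → ℕ) := fun k =>
    Nat.rec (motive := fun _ => Set (ℕ → ℕ)) univ (fun k S => S ∩ {σ | σ k ≤ next S k}) k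
  refine ⟨fun k => next (A k) k, fun k => ?_⟩
  have hPA : P (A k) := by
    induction k with
    | zero => exact h0
    | succ k ih => exact hnext _ k ih
  have hA : A k = boundedCylinder (fun k => next (A k) k) k := by
    clear hPA
    induction k with
    | zero => ext; simp [A, boundedCylinder]
    | succ k ih => rw [boundedCylinder_succ, ← ih]
  rwa [← hA]

theorem exists_lt_measure_image_inter_le {α X : Type*} [MeasurableSpace X] (μ : Measure X)
    (p : α → X) (f : α → ℕ) {S : Set α} {m : ℝ≥0∞} (h : m < μ (p '' S)) :
    ∃ n, m < μ (p '' (S ∩ {a | f a ≤ n})) := by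
  have hmono : Monotone fun n => p '' (S ∩ {a | f a ≤ n}) := fun n n' hn =>
    image_mono (inter_subset_inter_right _ fun a ha => le_trans ha hn)
  have hunion : ⋃ n, p '' (S ∩ {a | f a ≤ n}) = p '' S := by
    rw [← image_iUnion, ← inter_iUnion, iUnion_eq_univ_iff.2 fun a => ⟨f a, le_refl (f a)⟩,
      inter_univ]
  rwa [← hunion, hmono.measure_iUnion, lt_iSup_iff] at h

theorem iInter_closure_image_boundedCylinder_subset {X : Type*} [TopologicalSpace X] [T2Space X]
    {p : (ℕ → ℕ) → X} (hp : Continuous p) (b : ℕ → ℕ) :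
    ⋂ k, closure (p '' boundedCylinder b k) ⊆ p '' univ.pi fun i => Iic (b i) := by
  intro x hx
  set G := ⨅ k, comap p (𝓝 x) ⊓ 𝓟 (boundedCylinder b k)
  have : G.NeBot := by
    refine iInf_neBot_of_directed' ?_ fun k => inf_principal_neBot_iff.2 fun U hU => ?_
    · exact directed_of_isDirected_le fun k l hkl =>
        inf_le_inf_left _ (principal_mono.2 (antitone_boundedCylinder b hkl))
    · obtain ⟨V, hV, hVU⟩ := hU
      obtain ⟨_, hxV, σ, hσ, rfl⟩ := mem_closure_iff_nhds.1 (mem_iInter.1 hx k) V hV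
      exact ⟨σ, hVU hxV, hσ⟩
  -- Each coordinate of an ultrafilter finer than `G` is confined to a finite set, hence is pure.
  set U := Ultrafilter.of G
  have hUG : ↑U ≤ G := Ultrafilter.of_le G
  have hcoord : ∀ i, ∃ n ≤ b i, U.map (Function.eval i) = pure n := fun i =>
    Ultrafilter.eq_pure_of_finite_mem (finite_Iic (b i)) <| hUG <|
      mem_iInf_of_mem (i + 1) <| mem_inf_of_right fun σ hσ => hσ i i.lt_succ_self
  choose τ hτb hτ using hcoord
  have hUτ : ↑U ≤ 𝓝 τ := by
    rw [nhds_pi, le_pi]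
    intro i
    rw [nhds_discrete, ← Ultrafilter.coe_pure, ← hτ i, Ultrafilter.coe_map]
    exact tendsto_map
  refine ⟨τ, fun i _ => hτb i, tendsto_nhds_unique ((hp.tendsto τ).comp hUτ) ?_⟩
  exact tendsto_comap.mono_left (hUG.trans ((iInf_le _ 0).trans inf_le_left))

theorem exists_isCompact_lt_measure_image {X : Type*} [TopologicalSpace X] [T2Space X]
    [MeasurableSpace X] [OpensMeasurableSpace X] (μ : Measure X) [IsFiniteMeasure μ]
    {p : (ℕ → ℕ) → X} (hp : Continuous p) {m : ℝ≥0∞} (hm : m < μ (range p)) :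
    ∃ M, IsCompact M ∧ m < μ (p '' M) := by
  obtain ⟨m', hm, hm'⟩ := exists_between hm
  obtain ⟨b, hb⟩ := exists_forall_boundedCylinder (fun S => m' < μ (p '' S))
    (by rwa [image_univ]) fun S k hS => exists_lt_measure_image_inter_le μ p (· k) hS
  refine ⟨univ.pi fun i => Iic (b i), isCompact_univ_pi fun i => (finite_Iic _).isCompact,
    hm.trans_le ?_⟩
  have hanti : Antitone fun k => closure (p '' boundedCylinder b k) := fun k l hkl =>
    closure_mono (image_mono (antitone_boundedCylinder b hkl))
  calc m' ≤ ⨅ k, μ (closure (p '' boundedCylinder b k)) :=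
        le_iInf fun k => (hb k).le.trans (measure_mono subset_closure)
    _ = μ (⋂ k, closure (p '' boundedCylinder b k)) :=
        (hanti.measure_iInter (fun _ => measurableSet_closure.nullMeasurableSet)
          ⟨0, measure_ne_top μ _⟩).symm
    _ ≤ μ (p '' univ.pi fun i => Iic (b i)) :=
        measure_mono (iInter_closure_image_boundedCylinder_subset hp b)

/-- If `F ⊆ X × Y` is Borel in a product of Polish spaces, `μ` is a Borel probability
measure on `X`, and `K₀ ⊆ proj_X F` is compact with `μ K₀ > 0`, then there is a compact
`K ⊆ F` with `proj_X K ⊆ K₀` and `μ (proj_X K) > 0`. -/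
theorem compact_section_of_positive_measure
    {X Y : Type*} [TopologicalSpace X] [PolishSpace X] [MeasurableSpace X] [BorelSpace X]
    [TopologicalSpace Y] [PolishSpace Y] [MeasurableSpace Y] [BorelSpace Y]
    (F : Set (X × Y)) (hF : MeasurableSet F)
    (μ : Measure X) [IsProbabilityMeasure μ]
    (K₀ : Set X) (hK₀ : IsCompact K₀) (hK₀F : K₀ ⊆ Prod.fst '' F) (hpos : 0 < μ K₀) :
    ∃ K : Set (X × Y), IsCompact K ∧ K ⊆ F ∧ Prod.fst '' K ⊆ K₀ ∧
      0 < μ (Prod.fst '' K) := by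
  obtain hF₀ | ⟨g, hg, rfl⟩ := AnalyticSet_def F ▸ hF.analyticSet
  · simp_all
  have hrange : 0 < μ.restrict K₀ (range (Prod.fst ∘ g)) := by
    rwa [Measure.restrict_apply' hK₀.measurableSet, range_comp, inter_eq_right.2 hK₀F]
  obtain ⟨M, hM, hMpos⟩ := exists_isCompact_lt_measure_image _ (continuous_fst.comp hg) hrange
  refine ⟨g '' M ∩ Prod.fst ⁻¹' K₀, (hM.image hg).inter_right
    (hK₀.isClosed.preimage continuous_fst), inter_subset_left.trans (image_subset_range g M),
    ?_, ?_⟩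
  · rw [image_inter_preimage]
    exact inter_subset_right
  · rwa [image_inter_preimage, image_image, ← Measure.restrict_apply' hK₀.measurableSet]
end

section
/- Let f ∈ ω^ω be arbitrary. Then the set H(f) = {g ∈ ℤ^ω : |g(n)| ≤ f(n) for infinitely many n ∈ ω} is Haar-null in ℤ^ω. -/
open MeasureTheory Filter

noncomputable section

/-- A subset of `ℤ^ω` is universally measurable if it is measurable with respect to the
completion of every Borel probability measure on `ℤ^ω`. -/
def UnivMeasurable (U : Set (ℕ → ℤ)) : Prop :=
  ∀ μ : Measure (ℕ → ℤ), IsProbabilityMeasure μ → NullMeasurableSet U μ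

/-- Christensen's notion: `S ⊆ ℤ^ω` is Haar-null if there are a universally measurable
`U ⊇ S` and a Borel probability measure `μ` with `μ (U + g) = 0` for every `g ∈ ℤ^ω`. -/
def IsHaarNull (S : Set (ℕ → ℤ)) : Prop :=
  ∃ (U : Set (ℕ → ℤ)) (μ : Measure (ℕ → ℤ)),
    S ⊆ U ∧ UnivMeasurable U ∧ IsProbabilityMeasure μ ∧
    ∀ g : ℕ → ℤ, μ ((fun x => x + g) '' U) = 0

/-- Eventual domination `f ≤* g`: `f n ≤ g n` for all but finitely many `n`. -/
def EvLE (f g : ℕ → ℕ) : Prop := ∀ᶠ n in atTop, f n ≤ g n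

/-- A dominating family in Baire space. -/
def Dominating (S : Set (ℕ → ℕ)) : Prop := ∀ f : ℕ → ℕ, ∃ g ∈ S, EvLE f g

/-- `∏_{i<n} (b i + 1)`. -/
def basePow (b : ℕ → ℕ) (n : ℕ) : ℕ := ∏ i ∈ Finset.range n, (b i + 1)

/-- The digits of `x ∈ [0,1)` in the mixed-radix expansion with bases `b n + 1`;
the `n`-th digit is uniformly distributed on `{0, …, b n}`, and the digits are independent. -/
def digitMap (b : ℕ → ℕ) (x : ℝ) : ℕ → ℤ :=
  fun n => ⌊x * (basePow b (n + 1) : ℝ)⌋ - (b n + 1) * ⌊x * (basePow b n : ℝ)⌋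

/-- `μ_b`: the product probability measure on `ℤ^ω` whose `n`-th factor is the uniform
probability measure on `{0, 1, …, b n} ⊆ ℤ`, realized as the joint distribution of the
mixed-radix digits (with bases `b n + 1`) of a uniformly random point of `[0,1)`.
(Applied to an arbitrary set it gives the outer measure `μ_b^*`.) -/
def muB (b : ℕ → ℕ) : Measure (ℕ → ℤ) :=
  Measure.map (digitMap b) (volume.restrict (Set.Ico (0 : ℝ) 1))

end

/-! Let `μ` be the product of the uniform distributions on `{0, …, (2 f n + 1) 2ⁿ - 1}`. The
translate `H(f) - g` consists of the `h` with `|h n + g n| ≤ f n` for infinitely many `n`; each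
such window of `2 f n + 1` integers has probability at most `2⁻ⁿ` under the `n`-th factor, so the
translate is `μ`-null by Borel–Cantelli. `H(f)` itself is Borel, being a `limsup` of cylinders. -/

open ProbabilityTheory Finset
open scoped ENNReal

lemma measurableSet_setOf_infinite_mem {X : ℕ → Type*} [∀ n, MeasurableSpace (X n)]
    {A : ∀ n, Set (X n)} (hA : ∀ n, MeasurableSet (A n)) :
    MeasurableSet {x : ∀ n, X n | {n | x n ∈ A n}.Infinite} := by
  have := MeasurableSet.measurableSet_limsup fun n => measurable_pi_apply n (hA n)
  rwa [← Nat.cofinite_eq_atTop, cofinite.limsup_set_eq] at this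

lemma isHaarNull_of_measurableSet {S : Set (ℕ → ℤ)} (hS : MeasurableSet S)
    (μ : Measure (ℕ → ℤ)) [IsProbabilityMeasure μ] (hμ : ∀ g, μ ((· + g) ⁻¹' S) = 0) :
    IsHaarNull S :=
  ⟨S, μ, subset_rfl, fun _ _ => hS.nullMeasurableSet, inferInstance, fun g => by
    rw [Set.image_add_right]; exact hμ (-g)⟩

lemma uniformOn_le_card_div_card {Ω : Type*} [MeasurableSpace Ω] [MeasurableSingletonClass Ω]
    [DecidableEq Ω] (s t : Finset Ω) : uniformOn (s : Set Ω) t ≤ #t / #s := by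
  rw [uniformOn_apply_finset]
  gcongr
  exact inter_subset_right

instance isProbabilityMeasure_uniformOn_Ico (N : ℕ) [NeZero N] :
    IsProbabilityMeasure (uniformOn (Ico (0 : ℤ) N : Set ℤ)) :=
  isProbabilityMeasure_uniformOn (finite_toSet _) (by simp [NeZero.pos N])

lemma uniformOn_Ico_setOf_abs_add_le (N r : ℕ) (c : ℤ) :
    uniformOn (Ico (0 : ℤ) N : Set ℤ) {z | |z + c| ≤ r} ≤ (2 * r + 1 : ℕ) / N := by
  have hwindow : {z : ℤ | |z + c| ≤ r} = (Icc (-c - r) (-c + r) : Set ℤ) := by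
    ext z
    simp only [Set.mem_ofPred_eq, coe_Icc, Set.mem_Icc, abs_le]
    omega
  rw [hwindow]
  refine (uniformOn_le_card_div_card _ _).trans_eq ?_
  rw [Int.card_Icc, Int.card_Ico]
  congr 2
  omega

lemma ENNReal.natCast_succ_div_mul_two_pow (r n : ℕ) :
    ((r + 1 : ℕ) : ℝ≥0∞) / ((r + 1) * 2 ^ n : ℕ) = 2⁻¹ ^ n := by
  rw [← mul_one ((r + 1 : ℕ) : ℝ≥0∞), Nat.cast_mul,
    ENNReal.mul_div_mul_left _ _ (by simp) (by simp)]
  simp [ENNReal.inv_pow]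

lemma infinitePi_setOf_infinite_eq_zero {X : ℕ → Type*} [∀ n, MeasurableSpace (X n)]
    (μ : ∀ n, Measure (X n)) [∀ n, IsProbabilityMeasure (μ n)] {A : ∀ n, Set (X n)}
    (hA : ∀ n, MeasurableSet (A n)) (hsum : ∑' n, μ n (A n) ≠ ∞) :
    Measure.infinitePi μ {x | {n | x n ∈ A n}.Infinite} = 0 := by
  have hcoord : ∀ n, Measure.infinitePi μ (Function.eval n ⁻¹' A n) = μ n (A n) := fun n =>
    (measurePreserving_eval_infinitePi μ n).measure_preimage (hA n).nullMeasurableSet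
  have := measure_limsup_cofinite_eq_zero (μ := Measure.infinitePi μ)
    (s := fun n => Function.eval n ⁻¹' A n)
    (by simpa only [hcoord] using hsum)
  rwa [cofinite.limsup_set_eq] at this

/-- For every `f ∈ ω^ω`, the set `H(f) = {g ∈ ℤ^ω : |g(n)| ≤ f(n) for infinitely many n}`
is Haar-null in `ℤ^ω`. -/
theorem haarNull_of_infinitely_often_bounded (f : ℕ → ℕ) :
    IsHaarNull {g : ℕ → ℤ | {n : ℕ | |g n| ≤ (f n : ℤ)}.Infinite} := by
  refine isHaarNull_of_measurableSet
    (measurableSet_setOf_infinite_mem (A := fun n => {z : ℤ | |z| ≤ f n})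
      fun _ => .of_discrete)
    (Measure.infinitePi fun n => uniformOn (Ico (0 : ℤ) ((2 * f n + 1) * 2 ^ n : ℕ) : Set ℤ))
    fun g => infinitePi_setOf_infinite_eq_zero _ (A := fun n => {z | |z + g n| ≤ f n})
      (fun _ => .of_discrete) ?_
  refine ne_top_of_le_ne_top ?_
    (ENNReal.tsum_le_tsum fun n => uniformOn_Ico_setOf_abs_add_le _ (f n) (g n))
  simp only [ENNReal.natCast_succ_div_mul_two_pow, ENNReal.tsum_geometric, ENNReal.one_sub_inv_two,
    inv_inv]
  exact ENNReal.ofNat_ne_top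
end

section
/- Let f ∈ ω^ω and define f' ∈ ω^ω by f'(n) = 2^n · (f(n) + 1). Then for every h ∈ ℤ^ω, μ_{f'}(H(f) + h) = 0, where H(f) = {g ∈ ℤ^ω : |g(n)| ≤ f(n) for infinitely many n ∈ ω} (a Borel subset of ℤ^ω). -/
/-! The `n`-th coordinate of `μ_b` is uniform on `b n + 1` values, so the translate
`{g : |g n - h n| ≤ f n}` of the `n`-th constraint has mass at most `(2 f n + 1) / (b n + 1)`.
For `b = f'` this is at most `2 / 2^n`, which is summable, and by Borel–Cantelli almost no `g`
satisfies infinitely many of these constraints. -/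

open MeasureTheory Filter

open scoped ENNReal

lemma basePow_pos (b : ℕ → ℕ) (n : ℕ) : 0 < basePow b n :=
  Finset.prod_pos fun _ _ => Nat.succ_pos _

lemma basePow_succ (b : ℕ → ℕ) (n : ℕ) : basePow b (n + 1) = basePow b n * (b n + 1) :=
  Finset.prod_range_succ _ _

lemma measurable_digitMap (b : ℕ → ℕ) : Measurable (digitMap b) :=
  measurable_pi_lambda _ fun _ =>
    (measurable_id.mul_const _).floor.sub ((measurable_id.mul_const _).floor.const_mul _)

lemma volume_floor_mul_eq {c : ℝ} (hc : 0 < c) (k : ℤ) :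
    volume {x : ℝ | ⌊x * c⌋ = k} = ENNReal.ofReal c⁻¹ := by
  have hIco : {x : ℝ | ⌊x * c⌋ = k} = Set.Ico (k / c) ((k + 1) / c) := by
    ext x
    simp only [Set.mem_ofPred_eq, Int.floor_eq_iff, Set.mem_Ico, div_le_iff₀ hc, lt_div_iff₀ hc]
  rw [hIco, Real.volume_Ico, ← sub_div, add_sub_cancel_left, one_div]

/-- Digit `n` equals `d` exactly when `⌊x · basePow b (n+1)⌋ = j (b n + 1) + d` with
`j = ⌊x · basePow b n⌋ < basePow b n`: a union of `basePow b n` cells of length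
`1 / basePow b (n+1)`. -/
lemma volume_digitMap_eq_le (b : ℕ → ℕ) (n : ℕ) (d : ℤ) :
    volume ({x | digitMap b x n = d} ∩ Set.Ico (0 : ℝ) 1) ≤ ENNReal.ofReal (b n + 1 : ℝ)⁻¹ := by
  set B := basePow b n with hB_def
  have hB : (0 : ℝ) < B := by exact_mod_cast basePow_pos b n
  have hB' : (0 : ℝ) < basePow b (n + 1) := by exact_mod_cast basePow_pos b (n + 1)
  have hcover : {x | digitMap b x n = d} ∩ Set.Ico (0 : ℝ) 1 ⊆
      ⋃ j ∈ Finset.range B, {x : ℝ | ⌊x * basePow b (n + 1)⌋ = j * (b n + 1) + d} := by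
    rintro x ⟨hd, hx0, hx1⟩
    have hj0 : 0 ≤ ⌊x * B⌋ := Int.floor_nonneg.2 (by positivity)
    have hjB : ⌊x * B⌋ < B := Int.floor_lt.2 (by push_cast; nlinarith)
    refine Set.mem_biUnion (x := ⌊x * B⌋.toNat) (Finset.mem_range.2 (by omega)) ?_
    rw [Set.mem_ofPred_eq, Int.toNat_of_nonneg hj0, ← hd, digitMap]
    ring
  calc volume ({x | digitMap b x n = d} ∩ Set.Ico (0 : ℝ) 1)
      ≤ ∑ j ∈ Finset.range B,
          volume {x : ℝ | ⌊x * basePow b (n + 1)⌋ = j * (b n + 1) + d} :=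
        (measure_mono hcover).trans (measure_biUnion_finset_le _ _)
    _ = B * ENNReal.ofReal (basePow b (n + 1) : ℝ)⁻¹ := by
        simp only [volume_floor_mul_eq hB', Finset.sum_const, Finset.card_range, nsmul_eq_mul]
    _ = ENNReal.ofReal (b n + 1 : ℝ)⁻¹ := by
        rw [← ENNReal.ofReal_natCast, ← ENNReal.ofReal_mul hB.le, basePow_succ, ← hB_def]
        congr 1
        push_cast
        field_simp

lemma muB_apply_mem_finset_le (b : ℕ → ℕ) (n : ℕ) (S : Finset ℤ) :
    muB b {g | g n ∈ S} ≤ ENNReal.ofReal (S.card / (b n + 1 : ℝ)) := by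
  have hmeas : MeasurableSet {g : ℕ → ℤ | g n ∈ S} :=
    measurable_pi_apply n (MeasurableSet.of_discrete (s := (S : Set ℤ)))
  have hpre : digitMap b ⁻¹' {g | g n ∈ S} ∩ Set.Ico 0 1 =
      ⋃ d ∈ S, {x | digitMap b x n = d} ∩ Set.Ico 0 1 := by
    ext x
    simp [and_left_comm]
  rw [muB, Measure.map_apply (measurable_digitMap b) hmeas,
    Measure.restrict_apply (measurable_digitMap b hmeas), hpre]
  calc volume (⋃ d ∈ S, {x | digitMap b x n = d} ∩ Set.Ico 0 1)
      ≤ ∑ d ∈ S, volume ({x | digitMap b x n = d} ∩ Set.Ico 0 1) := measure_biUnion_finset_le _ _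
    _ ≤ ∑ _d ∈ S, ENNReal.ofReal (b n + 1 : ℝ)⁻¹ :=
        Finset.sum_le_sum fun d _ => volume_digitMap_eq_le b n d
    _ = ENNReal.ofReal (S.card / (b n + 1 : ℝ)) := by
        rw [Finset.sum_const, nsmul_eq_mul, ← ENNReal.ofReal_natCast,
          ← ENNReal.ofReal_mul (by positivity), div_eq_mul_inv]

lemma muB_abs_sub_le_le (b f : ℕ → ℕ) (h : ℕ → ℤ) (n : ℕ) :
    muB b {g | |g n - h n| ≤ (f n : ℤ)} ≤ ENNReal.ofReal ((2 * f n + 1) / (b n + 1 : ℝ)) := by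
  have hset : {g : ℕ → ℤ | |g n - h n| ≤ (f n : ℤ)} =
      {g | g n ∈ Finset.Icc (h n - f n) (h n + f n)} := by
    ext g
    simp only [Set.mem_ofPred_eq, Finset.mem_Icc, abs_le]
    omega
  have hcard : ((Finset.Icc (h n - f n) (h n + f n)).card : ℝ) = 2 * f n + 1 := by
    rw [Int.card_Icc, show h n + f n + 1 - (h n - f n) = ((2 * f n + 1 : ℕ) : ℤ) by push_cast; ring,
      Int.toNat_natCast]
    push_cast
    ring
  rw [hset, ← hcard]
  exact muB_apply_mem_finset_le b n _

lemma muB_translate_of_infinitely_often_bounded_eq_zero_of_summable (b f : ℕ → ℕ) (h : ℕ → ℤ)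
    (hsum : Summable fun n => (2 * f n + 1) / (b n + 1 : ℝ)) :
    muB b ((fun g => g + h) '' {g : ℕ → ℤ | {n : ℕ | |g n| ≤ (f n : ℤ)}.Infinite}) = 0 := by
  set s : ℕ → Set (ℕ → ℤ) := fun n => {g | |g n - h n| ≤ (f n : ℤ)}
  have hsub : (fun g => g + h) '' {g : ℕ → ℤ | {n : ℕ | |g n| ≤ (f n : ℤ)}.Infinite} ⊆
      limsup s atTop := by
    rintro _ ⟨g, hg, rfl⟩
    rw [mem_limsup_iff_frequently_mem]
    simpa [s] using Nat.frequently_atTop_iff_infinite.2 hg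
  have htsum : ∑' n, muB b (s n) ≠ ∞ := by
    refine ne_top_of_le_ne_top ?_ (ENNReal.tsum_le_tsum fun n => muB_abs_sub_le_le b f h n)
    rw [← ENNReal.ofReal_tsum_of_nonneg (fun n => by positivity) hsum]
    exact ENNReal.ofReal_ne_top
  exact measure_mono_null hsub (measure_limsup_atTop_eq_zero htsum)

/-- With `f'(n) = 2^n (f(n) + 1)`, every translate of
`H(f) = {g ∈ ℤ^ω : |g(n)| ≤ f(n) for infinitely many n}` is `μ_{f'}`-null. -/
theorem muB_translate_of_infinitely_often_bounded_eq_zero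
    (f : ℕ → ℕ) (f' : ℕ → ℕ) (hf' : ∀ n, f' n = 2 ^ n * (f n + 1)) (h : ℕ → ℤ) :
    muB f' ((fun g => g + h) '' {g : ℕ → ℤ | {n : ℕ | |g n| ≤ (f n : ℤ)}.Infinite}) = 0 := by
  refine muB_translate_of_infinitely_often_bounded_eq_zero_of_summable f' f h
    ((summable_geometric_two' 4).of_nonneg_of_le (fun n => by positivity) fun n => ?_)
  rw [hf', div_le_div_iff₀ (by positivity) (by positivity)]
  push_cast
  nlinarith [pow_pos (two_pos : (0 : ℝ) < 2) n]
end

section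
/- Let W be a W-system and T ⊆ ω^{<ω} a Laver tree. Then the set C_{T,W} is a dominating subset of ω^ω. -/
/-- `res x n` is the restriction `x↾n` of `x : ω^ω` to its first `n` coordinates,
viewed as a finite sequence. -/
def res (x : ℕ → ℕ) (n : ℕ) : List ℕ := List.ofFn (fun i : Fin n => x i)

/-- A tree on `ω`: a set of finite sequences closed under initial segments. -/
def IsTree (T : Set (List ℕ)) : Prop := ∀ σ τ : List ℕ, σ <+: τ → τ ∈ T → σ ∈ T

/-- The set `[T]` of infinite branches of `T`. -/
def branches (T : Set (List ℕ)) : Set (ℕ → ℕ) := {x | ∀ n : ℕ, res x n ∈ T}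

/-- A W-system `W = {w_σ, s_σ : σ ∈ ω^{<ω}}`: finite sets `w_σ ⊆ ω`, a function `s_∅`
with finite domain `d ⊆ ω`, and for each nonempty `σ = τ⌢(m)` a function
`s_σ : w_τ → ω` with `s_σ(i) > m` for all `i ∈ w_τ`; moreover, for every `x ∈ ω^ω`,
`ω` is the disjoint union of `d` and the sets `w_{x↾n}`, `n ∈ ω`.
(The functions `s_σ` are modeled as total functions `ℕ → ℕ`; only their values on the
respective domains matter.) -/
structure WSystem where
  /-- the finite set `w_σ` -/
  w : List ℕ → Finset ℕ
  /-- the (finite) domain `d` of `s_∅` -/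
  d : Finset ℕ
  /-- the function `s_∅ : d → ω` -/
  sEmpty : ℕ → ℕ
  /-- the function `s_σ : w_{σ↾(lh σ − 1)} → ω` for nonempty `σ` -/
  s : List ℕ → ℕ → ℕ
  /-- for nonempty `σ = τ⌢(m)` and `i ∈ w_τ` we have `s_σ(i) > σ(lh σ − 1) = m` -/
  s_gt : ∀ (τ : List ℕ) (m : ℕ), ∀ i ∈ w τ, m < s (τ ++ [m]) i
  /-- for every `x ∈ ω^ω`, `ω` is the disjoint union of `d` and the `w_{x↾n}`, `n ∈ ω` -/
  cover : ∀ (x : ℕ → ℕ) (k : ℕ),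
    (k ∈ d ∧ ∀ n : ℕ, k ∉ w (res x n)) ∨ (k ∉ d ∧ ∃! n : ℕ, k ∈ w (res x n))

/-- The set `C_{T,W}` of all `y ∈ ω^ω` extending `s_∅` such that for some branch
`x ∈ [T]` we have `y↾w_{x↾n} = s_{x↾(n+1)}` for every `n`. -/
def CTW (W : WSystem) (T : Set (List ℕ)) : Set (ℕ → ℕ) :=
  {y | (∀ i ∈ W.d, y i = W.sEmpty i) ∧
    ∃ x ∈ branches T, ∀ n : ℕ, ∀ i ∈ W.w (res x n), y i = W.s (res x (n + 1)) i}

open Filter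

/-- A Laver tree: a nonempty tree with a stem (a node comparable with every node of the
tree) above which every node has infinitely many immediate successors in the tree. -/
def IsLaverTree (T : Set (List ℕ)) : Prop :=
  IsTree T ∧ ∃ stem ∈ T,
    (∀ t ∈ T, t <+: stem ∨ stem <+: t) ∧
    ∀ t ∈ T, stem <+: t → {n : ℕ | t ++ [n] ∈ T}.Infinite


/-!
Above the stem of a Laver tree every node has infinitely many successors, so for any
`f` we can follow a branch `x` whose value `x n` is, from the stem on, at least
`max f` on `w_{x↾n}`. The function `y` read off `W` along `x` then satisfies
`y i = s_{x↾(n+1)}(i) > x n ≥ f i` for every `i ∈ w_{x↾n}`; since `ω` is partitioned by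
`d` and the `w_{x↾n}`, all but finitely many `i` lie in such a set with `n` beyond the stem.
-/

theorem length_res (x : ℕ → ℕ) (n : ℕ) : (res x n).length = n :=
  List.length_ofFn

theorem getElem_res (x : ℕ → ℕ) {n i : ℕ} (hi : i < (res x n).length) : (res x n)[i] = x i :=
  List.getElem_ofFn hi

theorem res_succ (x : ℕ → ℕ) (n : ℕ) : res x (n + 1) = res x n ++ [x n] := by
  rw [res, List.ofFn_succ', List.concat_eq_append]
  rfl

theorem res_prefix_res (x : ℕ → ℕ) {m n : ℕ} (hmn : m ≤ n) : res x m <+: res x n :=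
  Nat.rel_of_forall_rel_succ_of_le (· <+: ·)
    (fun k => (res_succ x k).symm ▸ List.prefix_append _ _) hmn

theorem exists_res_eq_of_prefix_chain (g : ℕ → List ℕ) (L : ℕ)
    (hchain : ∀ k, g k <+: g (k + 1)) (hlen : ∀ k, (g k).length = L + k) :
    ∃ x : ℕ → ℕ, ∀ k, res x (L + k) = g k := by
  have hagree : ∀ j k i (hj : i < (g j).length) (hk : i < (g k).length),
      (g j)[i] = (g k)[i] := by
    intro j k i hj hk
    rcases le_total j k with hjk | hkj
    · exact (Nat.rel_of_forall_rel_succ_of_le (· <+: ·) hchain hjk).getElem hj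
    · exact ((Nat.rel_of_forall_rel_succ_of_le (· <+: ·) hchain hkj).getElem hk).symm
  refine ⟨fun m => (g (m + 1)).getD m 0, fun k => ?_⟩
  refine List.ext_getElem (by rw [length_res, hlen]) fun i _ hik => ?_
  have hi' : i < (g (i + 1)).length := by rw [hlen]; omega
  rw [getElem_res, List.getD_eq_getElem _ _ hi']
  exact hagree _ _ _ hi' hik

theorem IsTree.exists_branch_of_forall_succ {T : Set (List ℕ)} (hT : IsTree T)
    {stem : List ℕ} (hstem : stem ∈ T) (P : List ℕ → ℕ → Prop)
    (hP : ∀ t ∈ T, stem <+: t → ∃ n, t ++ [n] ∈ T ∧ P t n) :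
    ∃ x ∈ branches T, ∀ n, stem.length ≤ n → P (res x n) (x n) := by
  choose! next hnext using hP
  let g : ℕ → List ℕ := fun k => (fun t => t ++ [next t])^[k] stem
  have hg_succ : ∀ k, g (k + 1) = g k ++ [next (g k)] := fun k =>
    Function.iterate_succ_apply' _ _ _
  have hgT : ∀ k, g k ∈ T ∧ stem <+: g k := by
    intro k
    induction k with
    | zero => exact ⟨hstem, List.prefix_refl _⟩
    | succ k ih =>
      rw [hg_succ]
      exact ⟨(hnext _ ih.1 ih.2).1, ih.2.trans (List.prefix_append _ _)⟩
  have hlen : ∀ k, (g k).length = stem.length + k := by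
    intro k
    induction k with
    | zero => rfl
    | succ k ih => rw [hg_succ, List.length_append, ih]; rfl
  obtain ⟨x, hx⟩ := exists_res_eq_of_prefix_chain g stem.length
    (fun k => hg_succ k ▸ List.prefix_append _ _) hlen
  refine ⟨x, fun n => hT _ _ (res_prefix_res x (Nat.le_add_left n stem.length)) ?_, ?_⟩
  · rw [hx]
    exact (hgT n).1
  · intro n hn
    obtain ⟨k, rfl⟩ := Nat.exists_eq_add_of_le hn
    have hstep : res x (stem.length + k) ++ [x (stem.length + k)] = g k ++ [next (g k)] := by
      rw [← res_succ, ← hg_succ, ← hx, Nat.add_assoc]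
    obtain ⟨hres, hval⟩ := List.append_inj hstep (by rw [length_res, hlen])
    rw [hres, List.singleton_inj.mp hval]
    exact (hnext _ (hgT k).1 (hgT k).2).2

theorem IsLaverTree.exists_branch_eventually_ge {T : Set (List ℕ)} (hT : IsLaverTree T)
    (b : List ℕ → ℕ) : ∃ x ∈ branches T, ∀ᶠ n in atTop, b (res x n) ≤ x n := by
  obtain ⟨hTree, stem, hstem, -, hsplit⟩ := hT
  obtain ⟨x, hx, hge⟩ := hTree.exists_branch_of_forall_succ hstem (fun t n => b t ≤ n)
    fun t ht hst => ((hsplit t ht hst).exists_gt (b t)).imp fun _ h => ⟨h.1, h.2.le⟩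
  exact ⟨x, hx, eventually_atTop.mpr ⟨stem.length, hge⟩⟩

namespace WSystem

variable (W : WSystem) (x : ℕ → ℕ)

theorem eq_of_mem_w {i m n : ℕ} (hm : i ∈ W.w (res x m)) (hn : i ∈ W.w (res x n)) :
    m = n := by
  rcases W.cover x i with ⟨-, hnone⟩ | ⟨-, k, -, huniq⟩
  · exact absurd hm (hnone m)
  · exact (huniq m hm).trans (huniq n hn).symm

/-- The element of `C_{T,W}` determined by the branch `x`: on `w_{x↾n}` it is
`s_{x↾(n+1)}`, elsewhere (that is, on `d`) it is `s_∅`. -/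
noncomputable def realize : ℕ → ℕ := by
  classical
  exact fun i =>
    if h : ∃ n, i ∈ W.w (res x n) then W.s (res x (h.choose + 1)) i else W.sEmpty i

theorem realize_of_mem_w {i n : ℕ} (hi : i ∈ W.w (res x n)) :
    W.realize x i = W.s (res x (n + 1)) i := by
  have hex : ∃ n, i ∈ W.w (res x n) := ⟨n, hi⟩
  simp only [realize, dif_pos hex, W.eq_of_mem_w x hex.choose_spec hi]

theorem realize_of_mem_d {i : ℕ} (hi : i ∈ W.d) : W.realize x i = W.sEmpty i := by
  have hnone : ¬∃ n, i ∈ W.w (res x n) := by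
    rintro ⟨n, hn⟩
    rcases W.cover x i with ⟨-, hnone⟩ | ⟨hid, -⟩
    · exact hnone n hn
    · exact hid hi
  simp only [realize, dif_neg hnone]

theorem realize_mem_CTW {T : Set (List ℕ)} (hx : x ∈ branches T) : W.realize x ∈ CTW W T :=
  ⟨fun _ => W.realize_of_mem_d x, x, hx, fun _ _ => W.realize_of_mem_w x⟩

theorem lt_realize_of_mem_w {i n : ℕ} (hi : i ∈ W.w (res x n)) : x n < W.realize x i := by
  rw [W.realize_of_mem_w x hi, res_succ]
  exact W.s_gt _ _ i hi

/-- Only the finitely many points of `d` and of `w_{x↾n}`, `n < N`, escape. -/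
theorem eventually_mem_w_of_ge (N : ℕ) :
    ∀ᶠ i in atTop, ∃ n, N ≤ n ∧ i ∈ W.w (res x n) := by
  let E : Finset ℕ := W.d ∪ (Finset.range N).biUnion fun n => W.w (res x n)
  rw [← Nat.cofinite_eq_atTop]
  filter_upwards [E.eventually_cofinite_notMem] with i hiE
  rcases W.cover x i with ⟨hid, -⟩ | ⟨-, n, hn, -⟩
  · exact absurd (Finset.mem_union_left _ hid) hiE
  · refine ⟨n, le_of_not_gt fun hnN => hiE ?_, hn⟩
    exact Finset.mem_union_right _ (Finset.mem_biUnion.mpr ⟨n, Finset.mem_range.mpr hnN, hn⟩)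

theorem evLE_realize {f : ℕ → ℕ} (hx : ∀ᶠ n in atTop, (W.w (res x n)).sup f ≤ x n) :
    EvLE f (W.realize x) := by
  obtain ⟨N, hN⟩ := eventually_atTop.mp hx
  filter_upwards [W.eventually_mem_w_of_ge x N] with i ⟨n, hNn, hi⟩
  calc f i ≤ (W.w (res x n)).sup f := Finset.le_sup hi
    _ ≤ x n := hN n hNn
    _ ≤ W.realize x i := (W.lt_realize_of_mem_w x hi).le

end WSystem

/-- For any W-system `W` and Laver tree `T`, the set `C_{T,W}` is dominating in `ω^ω`. -/
theorem CTW_dominating_of_laver (W : WSystem) (T : Set (List ℕ)) (hT : IsLaverTree T) :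
    Dominating (CTW W T) := by
  intro f
  obtain ⟨x, hx, hge⟩ := hT.exists_branch_eventually_ge fun t => (W.w t).sup f
  exact ⟨W.realize x, W.realize_mem_CTW x hx, W.evLE_realize x hge⟩
end
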